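/- arXiv:0803.0653 — 6 statements merged into one kernel-verified Lean document; each statement's English description precedes it below -/
import Mathlib

section
/- Let A and B be filtering rules over p condition attributes, each attribute a subset of some value domain. The rule C = exclusion(B, A) defined by the case analysis of Algorithm 2 satisfies: the set of packets matched by C equals the set of packets matched by B minus the set of packets matched by A. (A packet, a p-tuple of values, matches a rule iff its i-th component lies in the rule's i-th attribute set for all i; it matches C iff it matches at least one of the conjunctive clauses of C.) -/
/-- A packet `pkt` matches a conjunctive rule/clause `r` (given by one
condition set per attribute) iff each component lies in the corresponding set. -/
def Matches {p : ℕ} {V : Type*} (r : Fin p → Set V) (pkt : Fin p → V) : Prop :=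
  ∀ i, pkt i ∈ r i

/-- The `k`-th clause of the exclusion of `A` from `B`:
`(A_1 ∩ B_1) ∧ ... ∧ (A_{k-1} ∩ B_{k-1}) ∧ (B_k \ A_k) ∧ B_{k+1} ∧ ... ∧ B_p`. -/
def clause {p : ℕ} {V : Type*} (A B : Fin p → Set V) (k : Fin p) : Fin p → Set V :=
  fun i => if i < k then A i ∩ B i else if i = k then B i \ A i else B i

open Classical in
/-- `exclusion B A` (Algorithm 2): if all componentwise intersections are
nonempty, the disjunction of the `p` exclusion clauses; otherwise `B` unchanged. -/
noncomputable def exclusion {p : ℕ} {V : Type*} (B A : Fin p → Set V) :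
    List (Fin p → Set V) :=
  if ∀ i, (A i ∩ B i).Nonempty then (List.finRange p).map (clause A B) else [B]

/-- The set of packets matched by a disjunction of clauses. -/
def MatchedSet {p : ℕ} {V : Type*} (L : List (Fin p → Set V)) : Set (Fin p → V) :=
  {pkt | ∃ c ∈ L, Matches c pkt}

/-! A packet matches `B` but not `A` iff it has a least attribute `k` at which it leaves `A`,
which says exactly that it matches the `k`-th clause. When some `A i ∩ B i` is empty no packet
matches both `A` and `B`, so `B` itself already describes `B \ A`. -/

section Exclusion

variable {p : ℕ} {V : Type*} {A B : Fin p → Set V} {pkt : Fin p → V}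

theorem matches_clause_iff {k : Fin p} :
    Matches (clause A B k) pkt ↔ Matches B pkt ∧ (∀ i < k, pkt i ∈ A i) ∧ pkt k ∉ A k := by
  constructor
  · intro h
    refine ⟨fun i => ?_, fun i hik => ?_, ?_⟩
    · have hi := h i
      simp only [clause] at hi
      split_ifs at hi
      exacts [hi.2, hi.1, hi]
    · have hi := h i
      simp only [clause, if_pos hik] at hi
      exact hi.1
    · have hk := h k
      simp only [clause, lt_irrefl, if_false, if_true] at hk
      exact hk.2
  · rintro ⟨hB, hA, hk⟩ i
    simp only [clause]
    split_ifs with hik hik'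
    · exact ⟨hA i hik, hB i⟩
    · exact hik' ▸ ⟨hB k, hk⟩
    · exact hB i

theorem exists_matches_clause_iff :
    (∃ k, Matches (clause A B k) pkt) ↔ Matches B pkt ∧ ¬ Matches A pkt := by
  simp only [matches_clause_iff]
  constructor
  · rintro ⟨k, hB, -, hk⟩
    exact ⟨hB, fun hA => hk (hA k)⟩
  · rintro ⟨hB, hA⟩
    obtain ⟨i, hi⟩ : ∃ i, pkt i ∉ A i := not_forall.mp hA
    obtain ⟨k, hk, hmin⟩ := wellFounded_lt.has_min {i | pkt i ∉ A i} ⟨i, hi⟩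
    exact ⟨k, hB, fun j hjk => not_not.mp fun hj => hmin j hj hjk, hk⟩

theorem matchedSet_map_clause :
    MatchedSet ((List.finRange p).map (clause A B)) =
      {pkt | Matches B pkt} \ {pkt | Matches A pkt} := by
  ext pkt
  simpa [MatchedSet] using exists_matches_clause_iff

theorem matchedSet_singleton (r : Fin p → Set V) :
    MatchedSet [r] = {pkt | Matches r pkt} := by
  simp [MatchedSet]

theorem setOf_matches_diff_eq_self {i : Fin p} (h : ¬ (A i ∩ B i).Nonempty) :
    {pkt | Matches B pkt} \ {pkt | Matches A pkt} = {pkt | Matches B pkt} :=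
  sdiff_eq_left.mpr <| Set.disjoint_left.mpr fun pkt hB hA => h ⟨pkt i, hA i, hB i⟩

end Exclusion

/-- the packets matched by `exclusion B A` are exactly those
matched by `B` but not by `A`. -/
theorem exclusion_matchedSet {p : ℕ} {V : Type*} (B A : Fin p → Set V) :
    MatchedSet (exclusion B A) =
      {pkt | Matches B pkt} \ {pkt | Matches A pkt} := by
  unfold exclusion
  split_ifs with hne
  · exact matchedSet_map_clause
  · obtain ⟨i, hi⟩ := not_forall.mp hne
    rw [matchedSet_singleton, setOf_matches_diff_eq_self hi]
end

section
/- Theorem 1(3), shadowing-freeness part: after applying the policy-rewriting transformation Tr to a rule list R, the resulting rules have pairwise disjoint match sets; consequently no rule in Tr(R) is shadowed (no rule's match set is covered by higher-priority rules) and no rule is redundant (removing any rule with nonempty match set changes the policy semantics). -/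
/-!
Phase 1 leaves no two rules with different decisions overlapping: the later one has the
earlier one's match set removed. Phase 2 only shrinks or drops rules, so it keeps this, and it
removes each kept rule's match set from the later rules with the same decision; hence its
output is pairwise disjoint. A kept rule is nonempty, since an empty one is trivially covered
and dropped. In a pairwise disjoint list a packet of a nonempty rule `r` lies in no other rule,
so it is not covered by the earlier rules, and first-match gives it `r.dec` with `r` and no
decision at all without `r`.
-/

/-- A filtering rule: a match set over a packet space together with a
decision (`true` = accept, `false` = deny). -/
structure FwRule (P : Type*) where
  mtch : Set P
  dec : Bool

open Classical in
/-- First-match semantics: a packet gets the decision of the first rule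
whose match set contains it, and no decision if no rule matches. -/
noncomputable def firstMatch {P : Type*} : List (FwRule P) → P → Option Bool
  | [], _ => none
  | r :: rs, pkt => if pkt ∈ r.mtch then some r.dec else firstMatch rs pkt

/-- Phase 1 of Algorithm 4: every later rule with a decision differing from an
earlier rule gets the earlier rule's match set excluded from it
(`match(exclusion B A) = match B \ match A`). -/
noncomputable def phase1 {P : Type*} : List (FwRule P) → List (FwRule P)
  | [] => []
  | r :: rs =>
      r :: phase1 (rs.map fun s => if s.dec ≠ r.dec then ⟨s.mtch \ r.mtch, s.dec⟩ else s)
termination_by l => l.length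
decreasing_by simp

open Classical in
/-- Phase 2 of Algorithm 4: a rule whose match set is covered by the union of
the later rules with the same decision is removed (testRedundancy); otherwise
its match set is excluded from every later rule with the same decision. -/
noncomputable def phase2 {P : Type*} : List (FwRule P) → List (FwRule P)
  | [] => []
  | r :: rs =>
      if r.mtch ⊆ {pkt | ∃ s ∈ rs, s.dec = r.dec ∧ pkt ∈ s.mtch} then phase2 rs
      else r :: phase2 (rs.map fun s => if s.dec = r.dec then ⟨s.mtch \ r.mtch, s.dec⟩ else s)
termination_by l => l.length
decreasing_by all_goals simp

/-- The policy-rewriting transformation `Tr` of Algorithm 4. -/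
noncomputable def Tr {P : Type*} (R : List (FwRule P)) : List (FwRule P) :=
  phase2 (phase1 R)

namespace FwRule

variable {P : Type*}

def Refines (t s : FwRule P) : Prop :=
  t.mtch ⊆ s.mtch ∧ t.dec = s.dec

theorem Refines.refl (s : FwRule P) : s.Refines s :=
  ⟨subset_rfl, rfl⟩

theorem Refines.trans {t s u : FwRule P} (hts : t.Refines s) (hsu : s.Refines u) :
    t.Refines u :=
  ⟨hts.1.trans hsu.1, hts.2.trans hsu.2⟩

theorem refines_ite_exclude (c : Prop) [Decidable c] (s : FwRule P) (A : Set P) :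
    (if c then (⟨s.mtch \ A, s.dec⟩ : FwRule P) else s).Refines s := by
  split_ifs
  exacts [⟨Set.sdiff_subset, rfl⟩, Refines.refl s]

theorem disjoint_of_refines_exclude {c : Prop} [Decidable c] (hc : c) {t s : FwRule P}
    {A : Set P} (ht : t.Refines (if c then (⟨s.mtch \ A, s.dec⟩ : FwRule P) else s)) :
    Disjoint A t.mtch := by
  rw [if_pos hc] at ht
  exact Set.disjoint_sdiff_right.mono_right ht.1

def NoConflict (a b : FwRule P) : Prop :=
  a.dec ≠ b.dec → Disjoint a.mtch b.mtch

theorem NoConflict.mono {a b a' b' : FwRule P} (h : a.NoConflict b) (ha : a'.Refines a)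
    (hb : b'.Refines b) : a'.NoConflict b' := fun hdec =>
  (h (ha.2 ▸ hb.2 ▸ hdec)).mono ha.1 hb.1

end FwRule

open FwRule

section

variable {P : Type*}

theorem phase1_refines (l : List (FwRule P)) : ∀ t ∈ phase1 l, ∃ s ∈ l, t.Refines s := by
  induction l using phase1.induct with
  | case1 => simp [phase1]
  | case2 r rs ih =>
    simp only [dite_eq_ite, List.map_attach_eq_pmap, List.pmap_eq_map] at ih
    intro t ht
    rw [phase1, List.mem_cons] at ht
    rcases ht with rfl | ht
    · exact ⟨t, List.mem_cons_self, Refines.refl t⟩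
    · obtain ⟨_, hs, hts⟩ := ih t ht
      obtain ⟨u, hu, rfl⟩ := List.mem_map.mp hs
      exact ⟨u, List.mem_cons_of_mem _ hu, hts.trans (refines_ite_exclude _ u _)⟩

theorem phase1_pairwise_noConflict (l : List (FwRule P)) :
    (phase1 l).Pairwise NoConflict := by
  induction l using phase1.induct with
  | case1 => simp [phase1]
  | case2 r rs ih =>
    simp only [dite_eq_ite, List.map_attach_eq_pmap, List.pmap_eq_map] at ih
    rw [phase1]
    refine List.Pairwise.cons (fun t ht hdec => ?_) ih
    obtain ⟨_, hs, hts⟩ := phase1_refines _ t ht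
    obtain ⟨u, -, rfl⟩ := List.mem_map.mp hs
    have hu : u.dec ≠ r.dec := by
      rwa [← (hts.trans (refines_ite_exclude _ u _)).2, ne_comm]
    exact disjoint_of_refines_exclude hu hts

theorem phase2_refines (l : List (FwRule P)) : ∀ t ∈ phase2 l, ∃ s ∈ l, t.Refines s := by
  induction l using phase2.induct with
  | case1 => simp [phase2]
  | case2 r rs hcov ih =>
    intro t ht
    rw [phase2, if_pos hcov] at ht
    obtain ⟨s, hs, hts⟩ := ih t ht
    exact ⟨s, List.mem_cons_of_mem _ hs, hts⟩
  | case3 r rs hcov ih =>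
    simp only [dite_eq_ite, List.map_attach_eq_pmap, List.pmap_eq_map] at ih
    intro t ht
    rw [phase2, if_neg hcov, List.mem_cons] at ht
    rcases ht with rfl | ht
    · exact ⟨t, List.mem_cons_self, Refines.refl t⟩
    · obtain ⟨_, hs, hts⟩ := ih t ht
      obtain ⟨u, hu, rfl⟩ := List.mem_map.mp hs
      exact ⟨u, List.mem_cons_of_mem _ hu, hts.trans (refines_ite_exclude _ u _)⟩

theorem phase2_mtch_nonempty (l : List (FwRule P)) : ∀ t ∈ phase2 l, t.mtch.Nonempty := by
  induction l using phase2.induct with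
  | case1 => simp [phase2]
  | case2 r rs hcov ih =>
    rwa [phase2, if_pos hcov]
  | case3 r rs hcov ih =>
    simp only [dite_eq_ite, List.map_attach_eq_pmap, List.pmap_eq_map] at ih
    rw [phase2, if_neg hcov]
    refine List.forall_mem_cons.mpr ⟨?_, ih⟩
    obtain ⟨x, hx, -⟩ := Set.not_subset.mp hcov
    exact ⟨x, hx⟩

theorem phase2_pairwise_disjoint {l : List (FwRule P)} (h : l.Pairwise NoConflict) :
    (phase2 l).Pairwise fun a b => Disjoint a.mtch b.mtch := by
  induction l using phase2.induct with
  | case1 => simp [phase2]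
  | case2 r rs hcov ih =>
    rw [phase2, if_pos hcov]
    exact ih (List.pairwise_cons.mp h).2
  | case3 r rs hcov ih =>
    simp only [dite_eq_ite, List.map_attach_eq_pmap, List.pmap_eq_map] at ih
    obtain ⟨hr, hrs⟩ := List.pairwise_cons.mp h
    rw [phase2, if_neg hcov]
    refine List.Pairwise.cons (fun t ht => ?_) (ih ?_)
    · obtain ⟨_, hs, hts⟩ := phase2_refines _ t ht
      obtain ⟨u, hu, rfl⟩ := List.mem_map.mp hs
      by_cases hdec : u.dec = r.dec
      · exact disjoint_of_refines_exclude hdec hts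
      · have htu := hts.trans (refines_ite_exclude _ u _)
        exact (hr u hu).mono (Refines.refl r) htu (htu.2 ▸ Ne.symm hdec)
    · exact hrs.map _ fun a b hab =>
        hab.mono (refines_ite_exclude _ a _) (refines_ite_exclude _ b _)

theorem firstMatch_append_of_forall_not_mem {l : List (FwRule P)} {pkt : P}
    (h : ∀ s ∈ l, pkt ∉ s.mtch) (l' : List (FwRule P)) :
    firstMatch (l ++ l') pkt = firstMatch l' pkt := by
  induction l with
  | nil => rfl
  | cons r rs ih =>
    rw [List.forall_mem_cons] at h
    rw [List.cons_append, firstMatch, if_neg h.1, ih h.2]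

theorem not_mem_of_pairwise_disjoint {l₁ l₂ : List (FwRule P)} {r : FwRule P}
    (h : (l₁ ++ r :: l₂).Pairwise fun a b => Disjoint a.mtch b.mtch) {pkt : P}
    (hpkt : pkt ∈ r.mtch) : ∀ s ∈ l₁ ++ l₂, pkt ∉ s.mtch := fun _ hs hps =>
  Set.disjoint_left.mp
    (List.rel_of_pairwise_cons ((List.pairwise_middle fun h => h.symm).mp h) hs) hpkt hps

end

/-- Theorem 1(3): the rules of `Tr R` have pairwise disjoint
match sets; consequently no rule of `Tr R` is shadowed (its match set covered
by the union of higher-priority rules), and no rule with nonempty match set is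
redundant (removing it changes the first-match semantics). -/
theorem Tr_disjoint_shadowFree_redundancyFree {P : Type*} (R : List (FwRule P)) :
    (Tr R).Pairwise (fun a b => a.mtch ∩ b.mtch = ∅) ∧
    (∀ (l1 : List (FwRule P)) (r : FwRule P) (l2 : List (FwRule P)),
        Tr R = l1 ++ r :: l2 → ¬ r.mtch ⊆ {pkt | ∃ s ∈ l1, pkt ∈ s.mtch}) ∧
    (∀ (l1 : List (FwRule P)) (r : FwRule P) (l2 : List (FwRule P)),
        Tr R = l1 ++ r :: l2 → r.mtch.Nonempty →
          ∃ pkt : P, firstMatch (l1 ++ r :: l2) pkt ≠ firstMatch (l1 ++ l2) pkt) := by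
  have hdisj : (Tr R).Pairwise fun a b => Disjoint a.mtch b.mtch :=
    phase2_pairwise_disjoint (phase1_pairwise_noConflict R)
  refine ⟨hdisj.imp Set.disjoint_iff_inter_eq_empty.mp, ?_, ?_⟩
  · intro l1 r l2 hTr hcov
    obtain ⟨pkt, hpkt⟩ := phase2_mtch_nonempty (phase1 R) r (by show r ∈ Tr R; simp [hTr])
    obtain ⟨s, hs, hps⟩ := hcov hpkt
    rw [hTr] at hdisj
    exact not_mem_of_pairwise_disjoint hdisj hpkt s (List.mem_append_left _ hs) hps
  · intro l1 r l2 hTr ⟨pkt, hpkt⟩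
    rw [hTr] at hdisj
    have hout := not_mem_of_pairwise_disjoint hdisj hpkt
    refine ⟨pkt, ?_⟩
    rw [firstMatch_append_of_forall_not_mem (fun s hs => hout s (List.mem_append_left _ hs)),
      ← (l1 ++ l2).append_nil, firstMatch_append_of_forall_not_mem hout]
    simp [firstMatch, hpkt]
end

section
/- Deployment produces no inter-firewall shadowing or misconnection: under the deployment strategy of Algorithm 5 applied to a rule set R whose rules have pairwise disjoint match sets (as guaranteed by policy-rewriting), if a firewall f on MR(z1, z2) holds a deployed prohibition matching a packet from z1 to z2, then no firewall on MR(z1, z2) downstream of f holds a deployed permission matching the same packet, and f is the first firewall of MR(z1, z2). -/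
/-- The restriction `r'` of a rule `r` to source zone `z1` and destination
zone `z2`: it matches exactly the packets of `r` from `z1` to `z2`. -/
def restrictRule {Z P : Type*} (src dst : P → Z) (r : FwRule P) (z1 z2 : Z) :
    FwRule P :=
  ⟨r.mtch ∩ {p | src p = z1 ∧ dst p = z2}, r.dec⟩

/-!
A deployed rule is the restriction of some `r ∈ R` to a pair of zones, so a deployed rule that
matches a packet is the restriction of a rule of `R` matching it to the packet's own zones.
Two such rules, one deployed as a prohibition and one as a permission, come from rules of `R`
with different decisions that share the packet, which disjointness forbids. So a packet hit by a
deployed prohibition is hit by no deployed permission anywhere, and deny rules only ever sit on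
the first firewall of their route.
-/

theorem List.Pairwise.eq_of_mem_inter {α β : Type*} {l : List α} {s : α → Set β}
    (h : l.Pairwise fun a b => s a ∩ s b = ∅) {a b : α} (ha : a ∈ l) (hb : b ∈ l) {p : β}
    (hp : p ∈ s a ∩ s b) : a = b := by
  have : Std.Symm fun a b => s a ∩ s b = ∅ := ⟨fun _ _ hab => by rwa [Set.inter_comm]⟩
  by_contra hne
  rw [h.forall ha hb hne] at hp
  exact hp

namespace FwRule

variable {Z P : Type*} (src dst : P → Z)

@[simp]
theorem mem_restrictRule_mtch {r : FwRule P} {z1 z2 : Z} {p : P} :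
    p ∈ (restrictRule src dst r z1 z2).mtch ↔ p ∈ r.mtch ∧ src p = z1 ∧ dst p = z2 :=
  Iff.rfl

variable {F : Type*} {MR : Z → Z → List F} {R : List (FwRule P)} {deployedAt : F → Set (FwRule P)}
  (hchar : ∀ (f : F) (r' : FwRule P), r' ∈ deployedAt f ↔
    ∃ r ∈ R, ∃ z1 z2 : Z, r' = restrictRule src dst r z1 z2 ∧
      ((r.dec = true ∧ f ∈ MR z1 z2) ∨ (r.dec = false ∧ (MR z1 z2).head? = some f)))
include hchar

theorem exists_source_of_mem_deployedAt {f : F} {r' : FwRule P} {p : P}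
    (hr' : r' ∈ deployedAt f) (hp : p ∈ r'.mtch) :
    ∃ r ∈ R, p ∈ r.mtch ∧ r.dec = r'.dec ∧
      ((r.dec = true ∧ f ∈ MR (src p) (dst p)) ∨
        (r.dec = false ∧ (MR (src p) (dst p)).head? = some f)) := by
  obtain ⟨r, hrR, z1, z2, rfl, hplace⟩ := (hchar f r').1 hr'
  obtain ⟨hpr, rfl, rfl⟩ := (mem_restrictRule_mtch src dst).1 hp
  exact ⟨r, hrR, hpr, rfl, hplace⟩

theorem head?_eq_of_deployed_deny {f : F} {r' : FwRule P} {p : P}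
    (hr' : r' ∈ deployedAt f) (hdeny : r'.dec = false) (hp : p ∈ r'.mtch) :
    (MR (src p) (dst p)).head? = some f := by
  obtain ⟨r, -, -, hdec, hplace | ⟨-, hhead⟩⟩ := exists_source_of_mem_deployedAt src dst hchar hr' hp
  · simp_all
  · exact hhead

theorem dec_eq_false_of_deployed_deny {f g : F} {r' r'' : FwRule P} {p : P}
    (hdisj : R.Pairwise fun a b => a.mtch ∩ b.mtch = ∅)
    (hr' : r' ∈ deployedAt f) (hdeny : r'.dec = false) (hp' : p ∈ r'.mtch)
    (hr'' : r'' ∈ deployedAt g) (hp'' : p ∈ r''.mtch) : r''.dec = false := by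
  obtain ⟨r₁, hr₁R, hpr₁, hdec₁, -⟩ := exists_source_of_mem_deployedAt src dst hchar hr' hp'
  obtain ⟨r₂, hr₂R, hpr₂, hdec₂, -⟩ := exists_source_of_mem_deployedAt src dst hchar hr'' hp''
  obtain rfl : r₁ = r₂ := hdisj.eq_of_mem_inter hr₁R hr₂R ⟨hpr₁, hpr₂⟩
  rw [← hdec₂, hdec₁, hdeny]

end FwRule

/-- under Algorithm 5's deployment of a rule set `R` with
pairwise disjoint match sets (accept rules replicated on every firewall of the
minimal route, deny rules placed only on its first firewall), if a firewall
`f` on `MR z1 z2` holds a deployed prohibition matching a packet from `z1` to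
`z2`, then `f` is the first firewall of `MR z1 z2` and no downstream firewall
on `MR z1 z2` holds a deployed permission matching the same packet. -/
theorem deployment_no_shadowing_no_misconnection {F Z P : Type*}
    (src dst : P → Z) (MR : Z → Z → List F)
    (R : List (FwRule P))
    (hdisj : R.Pairwise fun a b => a.mtch ∩ b.mtch = ∅)
    (deployedAt : F → Set (FwRule P))
    (hchar : ∀ (f : F) (r' : FwRule P), r' ∈ deployedAt f ↔
        ∃ r ∈ R, ∃ z1 z2 : Z, r' = restrictRule src dst r z1 z2 ∧
          ((r.dec = true ∧ f ∈ MR z1 z2) ∨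
           (r.dec = false ∧ (MR z1 z2).head? = some f))) :
    ∀ (pkt : P) (z1 z2 : Z) (f : F), src pkt = z1 → dst pkt = z2 →
      f ∈ MR z1 z2 →
      (∃ r' ∈ deployedAt f, r'.dec = false ∧ pkt ∈ r'.mtch) →
      (MR z1 z2).head? = some f ∧
        ∀ (l1 l2 : List F), MR z1 z2 = l1 ++ f :: l2 → ∀ g ∈ l2,
          ¬ ∃ r'' ∈ deployedAt g, r''.dec = true ∧ pkt ∈ r''.mtch := by
  rintro pkt _ _ f rfl rfl - ⟨r', hr', hdeny, hp'⟩
  refine ⟨FwRule.head?_eq_of_deployed_deny src dst hchar hr' hdeny hp', ?_⟩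
  rintro - - - g - ⟨r'', hr'', haccept, hp''⟩
  simp [FwRule.dec_eq_false_of_deployed_deny src dst hchar hdisj hr' hdeny hp' hr'' hp''] at haccept
end

section
/- Deployment produces no inter-firewall redundancy: under Algorithm 5's strategy, for any two distinct firewalls f1 ≠ f2 on a minimal route MR(z1, z2), there is no packet from z1 to z2 that is denied by deployed rules at both f1 and f2. -/
@[simp]
theorem restrictRule_dec {Z P : Type*} (src dst : P → Z) (r : FwRule P) (z1 z2 : Z) :
    (restrictRule src dst r z1 z2).dec = r.dec :=
  rfl

theorem mem_restrictRule_mtch {Z P : Type*} {src dst : P → Z} {r : FwRule P} {z1 z2 : Z}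
    {p : P} :
    p ∈ (restrictRule src dst r z1 z2).mtch ↔ p ∈ r.mtch ∧ src p = z1 ∧ dst p = z2 :=
  Iff.rfl

/-- Deny rules sit only at the head of their route, and the zone restriction makes that route
the one of the matched packet. -/
theorem head?_route_eq_of_deployed_deny {F Z P : Type*} {src dst : P → Z} {MR : Z → Z → List F}
    {R : List (FwRule P)} {deployedAt : F → Set (FwRule P)}
    (hdeployed : ∀ (f : F) (r' : FwRule P), r' ∈ deployedAt f →
        ∃ r ∈ R, ∃ z1 z2 : Z, r' = restrictRule src dst r z1 z2 ∧
          ((r.dec = true ∧ f ∈ MR z1 z2) ∨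
           (r.dec = false ∧ (MR z1 z2).head? = some f)))
    {f : F} {q : FwRule P} {pkt : P}
    (hq : q ∈ deployedAt f) (hdeny : q.dec = false) (hpkt : pkt ∈ q.mtch) :
    (MR (src pkt) (dst pkt)).head? = some f := by
  obtain ⟨r, -, z1, z2, rfl, hplaced⟩ := hdeployed f q hq
  obtain ⟨-, rfl, rfl⟩ := mem_restrictRule_mtch.mp hpkt
  rcases hplaced with ⟨haccept, -⟩ | ⟨-, hhead⟩
  · simp [haccept] at hdeny
  · exact hhead

theorem deployment_no_inter_firewall_redundancy_general {F Z P : Type*}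
    (src dst : P → Z) (MR : Z → Z → List F)
    (R : List (FwRule P))
    (deployedAt : F → Set (FwRule P))
    (hchar : ∀ (f : F) (r' : FwRule P), r' ∈ deployedAt f ↔
        ∃ r ∈ R, ∃ z1 z2 : Z, r' = restrictRule src dst r z1 z2 ∧
          ((r.dec = true ∧ f ∈ MR z1 z2) ∨
           (r.dec = false ∧ (MR z1 z2).head? = some f))) :
    ∀ (z1 z2 : Z), ∀ f1 ∈ MR z1 z2, ∀ f2 ∈ MR z1 z2, f1 ≠ f2 →
      ¬ ∃ pkt : P, src pkt = z1 ∧ dst pkt = z2 ∧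
          (∃ r' ∈ deployedAt f1, r'.dec = false ∧ pkt ∈ r'.mtch) ∧
          (∃ r'' ∈ deployedAt f2, r''.dec = false ∧ pkt ∈ r''.mtch) := by
  rintro z1 z2 f1 - f2 - hne ⟨pkt, rfl, rfl, ⟨r', hr', hdeny', hpkt'⟩, ⟨r'', hr'', hdeny'', hpkt''⟩⟩
  have hdeployed := fun f r' => (hchar f r').mp
  have h1 := head?_route_eq_of_deployed_deny hdeployed hr' hdeny' hpkt'
  have h2 := head?_route_eq_of_deployed_deny hdeployed hr'' hdeny'' hpkt''
  exact hne (Option.some_injective _ (h1.symm.trans h2))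

/-- under Algorithm 5's deployment strategy (deny rules placed
only on the first firewall of the minimal route, accept rules on all of them),
for any two distinct firewalls on a minimal route `MR z1 z2` there is no
packet from `z1` to `z2` that is denied by deployed rules at both. -/
theorem deployment_no_inter_firewall_redundancy {F Z P : Type*}
    (src dst : P → Z) (MR : Z → Z → List F)
    (R : List (FwRule P))
    (hdisj : R.Pairwise fun a b => a.mtch ∩ b.mtch = ∅)
    (deployedAt : F → Set (FwRule P))
    (hchar : ∀ (f : F) (r' : FwRule P), r' ∈ deployedAt f ↔
        ∃ r ∈ R, ∃ z1 z2 : Z, r' = restrictRule src dst r z1 z2 ∧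
          ((r.dec = true ∧ f ∈ MR z1 z2) ∨
           (r.dec = false ∧ (MR z1 z2).head? = some f))) :
    ∀ (z1 z2 : Z), ∀ f1 ∈ MR z1 z2, ∀ f2 ∈ MR z1 z2, f1 ≠ f2 →
      ¬ ∃ pkt : P, src pkt = z1 ∧ dst pkt = z2 ∧
          (∃ r' ∈ deployedAt f1, r'.dec = false ∧ pkt ∈ r'.mtch) ∧
          (∃ r'' ∈ deployedAt f2, r''.dec = false ∧ pkt ∈ r''.mtch) :=
  deployment_no_inter_firewall_redundancy_general src dst MR R deployedAt hchar
end

section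
/- Round-trip property: if a distributed configuration over firewalls F is exactly the result of deploying an anomaly-free global rule set R via the deployment strategy (permissions replicated along minimal routes, prohibitions placed only at the first firewall of the minimal route), then the end-to-end filtering semantics of the distributed configuration coincides with the semantics of R: a packet from zone z1 to zone z2 is delivered iff some accept rule of R matches it, and blocked iff some deny rule of R matches it or no rule matches it. -/
/-!
With pairwise disjoint rules, at most one rule of `R` matches a given packet. Every deployed
rule is a restriction of a rule of `R`, so every deployed rule matching the packet inherits the
decision of that unique global rule. Hence, if it is an accept rule, its restriction to the
packet's zones sits on every firewall of the route and decides first; conversely, acceptance at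
the first firewall of the (nonempty) route already exhibits a matching accept rule of `R`.
Blocking is the complement of delivery, and by the same uniqueness it means that the rule of `R`
matching the packet, if any, is a deny rule.
-/

theorem exists_mem_mtch_of_firstMatch_eq_some {P : Type*} {l : List (FwRule P)} {pkt : P}
    {b : Bool} (h : firstMatch l pkt = some b) : ∃ r ∈ l, pkt ∈ r.mtch ∧ r.dec = b := by
  induction l with
  | nil => cases h
  | cons a t ih =>
    rw [firstMatch] at h
    split_ifs at h with hm
    · exact ⟨a, List.mem_cons_self, hm, Option.some_injective _ h⟩
    · obtain ⟨r, hr, hrm, hrd⟩ := ih h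
      exact ⟨r, List.mem_cons_of_mem a hr, hrm, hrd⟩

theorem firstMatch_eq_some_of_forall_dec_eq {P : Type*} {l : List (FwRule P)} {pkt : P}
    {b : Bool} (hex : ∃ r ∈ l, pkt ∈ r.mtch) (hall : ∀ r ∈ l, pkt ∈ r.mtch → r.dec = b) :
    firstMatch l pkt = some b := by
  induction l with
  | nil => simp at hex
  | cons a t ih =>
    rw [firstMatch]
    split_ifs with hm
    · rw [hall a List.mem_cons_self hm]
    · obtain ⟨r, hr, hrm⟩ := hex
      rcases List.mem_cons.1 hr with rfl | hrt
      · exact absurd hrm hm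
      · exact ih ⟨r, hrt, hrm⟩ fun r hr => hall r (List.mem_cons_of_mem a hr)

theorem FwRule.eq_of_mem_mtch {P : Type*} {R : List (FwRule P)}
    (hdisj : R.Pairwise fun a b => a.mtch ∩ b.mtch = ∅) {r r' : FwRule P} (hr : r ∈ R)
    (hr' : r' ∈ R) {pkt : P} (hm : pkt ∈ r.mtch) (hm' : pkt ∈ r'.mtch) : r = r' := by
  have : Std.Symm fun a b : FwRule P => a.mtch ∩ b.mtch = ∅ :=
    ⟨fun a b h => by rwa [Set.inter_comm]⟩
  by_contra hne
  have hempty : pkt ∈ (∅ : Set P) := hdisj.forall hr hr' hne ▸ ⟨hm, hm'⟩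
  exact hempty

theorem not_exists_accept_iff {P : Type*} {R : List (FwRule P)}
    (hdisj : R.Pairwise fun a b => a.mtch ∩ b.mtch = ∅) (pkt : P) :
    (¬ ∃ r ∈ R, r.dec = true ∧ pkt ∈ r.mtch) ↔
      (∃ r ∈ R, r.dec = false ∧ pkt ∈ r.mtch) ∨ ∀ r ∈ R, pkt ∉ r.mtch := by
  constructor
  · intro hacc
    by_cases hex : ∃ r ∈ R, pkt ∈ r.mtch
    · obtain ⟨r, hr, hm⟩ := hex
      exact Or.inl ⟨r, hr, Bool.eq_false_iff.2 fun hd => hacc ⟨r, hr, hd, hm⟩, hm⟩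
    · exact Or.inr fun r hr hm => hex ⟨r, hr, hm⟩
  · rintro (⟨r, hr, hden, hm⟩ | hnone) ⟨r', hr', hacc, hm'⟩
    · rw [FwRule.eq_of_mem_mtch hdisj hr hr' hm hm', hacc] at hden
      exact Bool.noConfusion hden
    · exact hnone r' hr' hm'

section Deployment

variable {F Z P : Type*} (src dst : P → Z) (MR : Z → Z → List F) (R : List (FwRule P))
  (deployedList : F → List (FwRule P))

def IsDeployment : Prop :=
  ∀ (f : F) (r' : FwRule P), r' ∈ deployedList f ↔
    ∃ r ∈ R, ∃ z1 z2 : Z, r' = restrictRule src dst r z1 z2 ∧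
      ((r.dec = true ∧ f ∈ MR z1 z2) ∨ (r.dec = false ∧ (MR z1 z2).head? = some f))

def Delivered (pkt : P) : Prop :=
  ∀ f ∈ MR (src pkt) (dst pkt), firstMatch (deployedList f) pkt = some true

variable {src dst MR R deployedList}

theorem IsDeployment.exists_mem_mtch (hdep : IsDeployment src dst MR R deployedList) {f : F}
    {r' : FwRule P} (hr' : r' ∈ deployedList f) {pkt : P} (hm : pkt ∈ r'.mtch) :
    ∃ r ∈ R, pkt ∈ r.mtch ∧ r'.dec = r.dec := by
  obtain ⟨r, hr, z1, z2, rfl, -⟩ := (hdep f r').1 hr'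
  exact ⟨r, hr, hm.1, rfl⟩

theorem IsDeployment.restrictRule_mem (hdep : IsDeployment src dst MR R deployedList)
    {r : FwRule P} (hr : r ∈ R) (hacc : r.dec = true) {z1 z2 : Z} {f : F}
    (hf : f ∈ MR z1 z2) : restrictRule src dst r z1 z2 ∈ deployedList f :=
  (hdep f _).2 ⟨r, hr, z1, z2, rfl, Or.inl ⟨hacc, hf⟩⟩

theorem IsDeployment.delivered_iff (hdep : IsDeployment src dst MR R deployedList)
    (hdisj : R.Pairwise fun a b => a.mtch ∩ b.mtch = ∅) {pkt : P}
    (hroute : MR (src pkt) (dst pkt) ≠ []) :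
    Delivered src dst MR deployedList pkt ↔ ∃ r ∈ R, r.dec = true ∧ pkt ∈ r.mtch := by
  constructor
  · intro hdel
    obtain ⟨r', hr', hm', hacc⟩ :=
      exists_mem_mtch_of_firstMatch_eq_some (hdel _ (List.head_mem hroute))
    obtain ⟨r, hr, hm, hdec⟩ := hdep.exists_mem_mtch hr' hm'
    exact ⟨r, hr, hdec ▸ hacc, hm⟩
  · rintro ⟨r, hr, hacc, hm⟩ f hf
    refine firstMatch_eq_some_of_forall_dec_eq
      ⟨_, hdep.restrictRule_mem hr hacc hf, hm, rfl, rfl⟩ fun r' hr' hm' => ?_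
    obtain ⟨r'', hr'', hm'', hdec⟩ := hdep.exists_mem_mtch hr' hm'
    rw [hdec, FwRule.eq_of_mem_mtch hdisj hr'' hr hm'' hm, hacc]

end Deployment

theorem deployment_round_trip_general {F Z P : Type*}
    (src dst : P → Z) (MR : Z → Z → List F)
    (hMR : ∀ z1 z2 : Z, z1 ≠ z2 → MR z1 z2 ≠ [])
    (R : List (FwRule P))
    (hdisj : R.Pairwise fun a b => a.mtch ∩ b.mtch = ∅)
    (deployedList : F → List (FwRule P))
    (hchar : ∀ (f : F) (r' : FwRule P), r' ∈ deployedList f ↔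
        ∃ r ∈ R, ∃ z1 z2 : Z, r' = restrictRule src dst r z1 z2 ∧
          ((r.dec = true ∧ f ∈ MR z1 z2) ∨
           (r.dec = false ∧ (MR z1 z2).head? = some f))) :
    ∀ pkt : P, src pkt ≠ dst pkt →
      ((∀ f ∈ MR (src pkt) (dst pkt), firstMatch (deployedList f) pkt = some true) ↔
          ∃ r ∈ R, r.dec = true ∧ pkt ∈ r.mtch) ∧
      ((¬ ∀ f ∈ MR (src pkt) (dst pkt), firstMatch (deployedList f) pkt = some true) ↔
          ((∃ r ∈ R, r.dec = false ∧ pkt ∈ r.mtch) ∨ ∀ r ∈ R, pkt ∉ r.mtch)) := by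
  intro pkt hne
  have hdelivered : Delivered src dst MR deployedList pkt ↔ _ :=
    IsDeployment.delivered_iff hchar hdisj (hMR _ _ hne)
  exact ⟨hdelivered, (not_congr hdelivered).trans (not_exists_accept_iff hdisj pkt)⟩

/-- round-trip property: if the distributed configuration is
exactly the result of deploying an anomaly-free global rule set `R`
(permissions replicated along minimal routes, prohibitions only at the first
firewall of the minimal route), then a packet from `z1` to `z2` (`z1 ≠ z2`) is
delivered end-to-end (accepted, under first-match with default deny, by every
firewall of `MR z1 z2`) iff some accept rule of `R` matches it, and blocked
iff some deny rule of `R` matches it or no rule of `R` matches it. -/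
theorem deployment_round_trip {F Z P : Type*}
    (src dst : P → Z) (MR : Z → Z → List F)
    (hMR : ∀ z1 z2 : Z, z1 ≠ z2 → MR z1 z2 ≠ [])
    (R : List (FwRule P))
    (hdisj : R.Pairwise fun a b => a.mtch ∩ b.mtch = ∅)
    (hzones : ∀ r ∈ R, ∃ z1 z2 : Z, z1 ≠ z2 ∧
        r.mtch ⊆ {p | src p = z1 ∧ dst p = z2})
    (deployedList : F → List (FwRule P))
    (hchar : ∀ (f : F) (r' : FwRule P), r' ∈ deployedList f ↔
        ∃ r ∈ R, ∃ z1 z2 : Z, r' = restrictRule src dst r z1 z2 ∧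
          ((r.dec = true ∧ f ∈ MR z1 z2) ∨
           (r.dec = false ∧ (MR z1 z2).head? = some f))) :
    ∀ pkt : P, src pkt ≠ dst pkt →
      ((∀ f ∈ MR (src pkt) (dst pkt), firstMatch (deployedList f) pkt = some true) ↔
          ∃ r ∈ R, r.dec = true ∧ pkt ∈ r.mtch) ∧
      ((¬ ∀ f ∈ MR (src pkt) (dst pkt), firstMatch (deployedList f) pkt = some true) ↔
          ((∃ r ∈ R, r.dec = false ∧ pkt ∈ r.mtch) ∨ ∀ r ∈ R, pkt ∉ r.mtch)) :=
  deployment_round_trip_general src dst MR hMR R hdisj deployedList hchar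
end

section
/- For rules over p attributes with exclusion defined as in Algorithm 2, the p clauses produced in the nonempty-intersection case have pairwise disjoint match sets. -/
section ClauseDisjointness

variable {p : ℕ} {V : Type*} (A B : Fin p → Set V)

theorem clause_apply_self (k : Fin p) : clause A B k k = B k \ A k := by
  simp [clause]

theorem clause_apply_of_lt {i k : Fin p} (h : i < k) : clause A B k i = A i ∩ B i :=
  if_pos h

theorem not_matches_clause_and_clause_of_lt {k k' : Fin p} (hk : k < k') (pkt : Fin p → V) :
    ¬ (Matches (clause A B k) pkt ∧ Matches (clause A B k') pkt) := by
  rintro ⟨hm, hm'⟩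
  have hk_diff : pkt k ∈ B k \ A k := clause_apply_self A B k ▸ hm k
  have hk_inter : pkt k ∈ A k ∩ B k := clause_apply_of_lt A B hk ▸ hm' k
  exact hk_diff.2 hk_inter.1

end ClauseDisjointness

theorem exclusion_clauses_pairwise_disjoint_general {p : ℕ} {V : Type*}
    (B A : Fin p → Set V) :
    ∀ k k' : Fin p, k ≠ k' → ∀ pkt : Fin p → V,
      ¬ (Matches (clause A B k) pkt ∧ Matches (clause A B k') pkt) := by
  intro k k' hne pkt
  rcases hne.lt_or_gt with hlt | hgt
  · exact not_matches_clause_and_clause_of_lt A B hlt pkt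
  · exact fun hm => not_matches_clause_and_clause_of_lt A B hgt pkt hm.symm

/-- in the nonempty-intersection case, the `p` clauses produced
by `exclusion B A` have pairwise disjoint match sets. -/
theorem exclusion_clauses_pairwise_disjoint {p : ℕ} {V : Type*}
    (B A : Fin p → Set V) (h : ∀ i, (A i ∩ B i).Nonempty) :
    ∀ k k' : Fin p, k ≠ k' → ∀ pkt : Fin p → V,
      ¬ (Matches (clause A B k) pkt ∧ Matches (clause A B k') pkt) :=
  exclusion_clauses_pairwise_disjoint_general B A
end
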